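/- arXiv:2112.11512 — 5 statements merged into one kernel-verified Lean document; each statement's English description precedes it below -/
import Mathlib

section
/- The function f(x) = ((x/2) - 1/2)·K(x) + E(x) is monotonically increasing on [0,1), where K and E are the complete elliptic integrals of the first and second kind. -/
open Real Set

/-- Complete elliptic integral of the first kind, parameter convention `K(m)`. -/
noncomputable def ellipticK (m : ℝ) : ℝ :=
  ∫ θ in (0:ℝ)..(π/2), 1 / Real.sqrt (1 - m * Real.sin θ ^ 2)

/-- Complete elliptic integral of the second kind, parameter convention `E(m)`. -/
noncomputable def ellipticE (m : ℝ) : ℝ :=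
  ∫ θ in (0:ℝ)..(π/2), Real.sqrt (1 - m * Real.sin θ ^ 2)

lemma aux_pos {t : ℝ} (ht0 : 0 ≤ t) (ht1 : t < 1) (θ : ℝ) : 0 < 1 - t * Real.sin θ ^ 2 := by
  nlinarith [Real.sin_sq_le_one θ, sq_nonneg (Real.sin θ)]

lemma aux_cont {t : ℝ} : Continuous fun θ : ℝ => Real.sqrt (1 - t * Real.sin θ ^ 2) :=
  (continuous_const.sub (continuous_const.mul (Real.continuous_sin.pow 2))).sqrt

lemma aux_deriv {t : ℝ} (ht0 : 0 ≤ t) (ht1 : t < 1) (θ : ℝ) :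
    HasDerivAt (fun θ : ℝ => Real.sqrt (1 - t * Real.sin θ ^ 2))
      (-(t * (2 * Real.sin θ * Real.cos θ)) / (2 * Real.sqrt (1 - t * Real.sin θ ^ 2))) θ := by
  have h1 : HasDerivAt (fun θ : ℝ => 1 - t * Real.sin θ ^ 2)
      (-(t * (2 * Real.sin θ * Real.cos θ))) θ := by
    have := ((Real.hasDerivAt_sin θ).pow 2).const_mul t
    simpa using (this.const_sub 1)
  exact h1.sqrt (aux_pos ht0 ht1 θ).ne'

lemma aux_repr {t : ℝ} (ht0 : 0 ≤ t) (ht1 : t < 1) :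
    (t / 2 - 1 / 2) * ellipticK t + ellipticE t
      = ∫ θ in (0:ℝ)..(π/2),
          ((t / 2 - 1 / 2) * (1 / Real.sqrt (1 - t * Real.sin θ ^ 2))
            + Real.sqrt (1 - t * Real.sin θ ^ 2)) := by
  have h1 : IntervalIntegrable
      (fun θ : ℝ => (t / 2 - 1 / 2) * (1 / Real.sqrt (1 - t * Real.sin θ ^ 2)))
      MeasureTheory.volume 0 (π/2) := by
    apply Continuous.intervalIntegrable
    exact continuous_const.mul (continuous_const.div aux_cont
      (fun θ => (Real.sqrt_pos.2 (aux_pos ht0 ht1 θ)).ne'))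
  have h2 : IntervalIntegrable (fun θ : ℝ => Real.sqrt (1 - t * Real.sin θ ^ 2))
      MeasureTheory.volume 0 (π/2) := aux_cont.intervalIntegrable _ _
  rw [ellipticK, ellipticE, ← intervalIntegral.integral_const_mul,
    ← intervalIntegral.integral_add h1 h2]

lemma key {x y : ℝ} (hx0 : 0 ≤ x) (hxy : x < y) (hy1 : y < 1) :
    (x / 2 - 1 / 2) * ellipticK x + ellipticE x
      < (y / 2 - 1 / 2) * ellipticK y + ellipticE y := by
  have hx1 : x < 1 := hxy.trans hy1
  have hy0 : 0 ≤ y := hx0.trans hxy.le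
  set a : ℝ → ℝ := fun θ => Real.sqrt (1 - x * Real.sin θ ^ 2) with ha_def
  set b : ℝ → ℝ := fun θ => Real.sqrt (1 - y * Real.sin θ ^ 2) with hb_def
  have hax : ∀ θ, 0 < a θ := fun θ => Real.sqrt_pos.2 (aux_pos hx0 hx1 θ)
  have hbx : ∀ θ, 0 < b θ := fun θ => Real.sqrt_pos.2 (aux_pos hy0 hy1 θ)
  have hab : ∀ θ, 0 < a θ + b θ := fun θ => by linarith [hax θ, hbx θ]
  set gx : ℝ → ℝ := fun θ => (x / 2 - 1 / 2) * (1 / a θ) + a θ with hgx_def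
  set gy : ℝ → ℝ := fun θ => (y / 2 - 1 / 2) * (1 / b θ) + b θ with hgy_def
  set P : ℝ → ℝ := fun θ => (y - x) * Real.cos θ ^ 2 / (2 * (a θ + b θ)) with hP_def
  set W : ℝ → ℝ := fun θ => (y - x) * (Real.sin θ * Real.cos θ) / (2 * (a θ + b θ)) with hW_def
  -- key pointwise derivative identity
  have hW : ∀ θ : ℝ, HasDerivAt W (gy θ - gx θ - P θ) θ := by
    intro θ
    have ha' := aux_deriv hx0 hx1 θ
    have hb' := aux_deriv hy0 hy1 θ
    have hnum : HasDerivAt (fun θ => (y - x) * (Real.sin θ * Real.cos θ))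
        ((y - x) * (Real.cos θ * Real.cos θ + Real.sin θ * (-Real.sin θ))) θ :=
      ((Real.hasDerivAt_sin θ).mul (Real.hasDerivAt_cos θ)).const_mul (y - x)
    have hden : HasDerivAt (fun θ => 2 * (a θ + b θ))
        (2 * (-(x * (2 * Real.sin θ * Real.cos θ)) / (2 * a θ)
            + -(y * (2 * Real.sin θ * Real.cos θ)) / (2 * b θ))) θ :=
      (ha'.add hb').const_mul 2
    have hne : 2 * (a θ + b θ) ≠ 0 := (mul_pos two_pos (hab θ)).ne'
    have : HasDerivAt W _ θ := hnum.div hden hne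
    convert this using 1
    have ha2 : a θ ^ 2 = 1 - x * Real.sin θ ^ 2 := Real.sq_sqrt (aux_pos hx0 hx1 θ).le
    have hb2 : b θ ^ 2 = 1 - y * Real.sin θ ^ 2 := Real.sq_sqrt (aux_pos hy0 hy1 θ).le
    have hsc : Real.sin θ ^ 2 + Real.cos θ ^ 2 = 1 := Real.sin_sq_add_cos_sq θ
    have hane : a θ ≠ 0 := (hax θ).ne'
    have hbne : b θ ≠ 0 := (hbx θ).ne'
    have habne : a θ + b θ ≠ 0 := (hab θ).ne'
    simp only [hgy_def, hgx_def, hP_def]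
    linear_combination (norm := skip)
      ((y - 1 - 2 * a θ * b θ) / (2 * a θ * b θ * (a θ + b θ))
        - (y - x) * Real.cos θ ^ 2 / (2 * a θ * (a θ + b θ) ^ 2)) * ha2
      + ((1 + 2 * a θ * b θ - x) / (2 * a θ * b θ * (a θ + b θ))
        - (y - x) * Real.cos θ ^ 2 / (2 * b θ * (a θ + b θ) ^ 2)) * hb2
      + (-(1 + a θ * b θ) * (y - x) / (2 * a θ * b θ * (a θ + b θ))) * hsc
    field_simp
    ring
  -- continuity and integrability
  have hconta : Continuous a := aux_cont
  have hcontb : Continuous b := aux_cont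
  have hcontgx : Continuous gx :=
    (continuous_const.mul (continuous_const.div hconta fun θ => (hax θ).ne')).add hconta
  have hcontgy : Continuous gy :=
    (continuous_const.mul (continuous_const.div hcontb fun θ => (hbx θ).ne')).add hcontb
  have hcontP : Continuous P :=
    (continuous_const.mul (Real.continuous_cos.pow 2)).div
      (continuous_const.mul (hconta.add hcontb))
      (fun θ => (mul_pos two_pos (hab θ)).ne')
  have hintgx : IntervalIntegrable gx MeasureTheory.volume 0 (π/2) :=
    hcontgx.intervalIntegrable _ _
  have hintgy : IntervalIntegrable gy MeasureTheory.volume 0 (π/2) :=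
    hcontgy.intervalIntegrable _ _
  have hintP : IntervalIntegrable P MeasureTheory.volume 0 (π/2) :=
    hcontP.intervalIntegrable _ _
  have hintD : IntervalIntegrable (fun θ => gy θ - gx θ - P θ) MeasureTheory.volume 0 (π/2) :=
    ((hcontgy.sub hcontgx).sub hcontP).intervalIntegrable _ _
  -- the FTC step
  have h0 : (∫ θ in (0:ℝ)..(π/2), (gy θ - gx θ - P θ)) = W (π/2) - W 0 :=
    intervalIntegral.integral_eq_sub_of_hasDerivAt (fun θ _ => hW θ) hintD
  have hW0 : W 0 = 0 := by simp [hW_def]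
  have hWpi : W (π/2) = 0 := by simp [hW_def, Real.cos_pi_div_two]
  have hPpos : 0 < ∫ θ in (0:ℝ)..(π/2), P θ := by
    apply intervalIntegral.intervalIntegral_pos_of_pos_on hintP _ (by linarith [Real.pi_pos])
    intro θ hθ
    have hc : 0 < Real.cos θ := Real.cos_pos_of_mem_Ioo
      ⟨by linarith [hθ.1, Real.pi_pos], hθ.2⟩
    simp only [hP_def]
    exact div_pos (mul_pos (by linarith) (pow_pos hc 2)) (mul_pos two_pos (hab θ))
  have hsplit : (∫ θ in (0:ℝ)..(π/2), gy θ) - (∫ θ in (0:ℝ)..(π/2), gx θ)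
      = (∫ θ in (0:ℝ)..(π/2), (gy θ - gx θ - P θ)) + ∫ θ in (0:ℝ)..(π/2), P θ := by
    rw [← intervalIntegral.integral_add hintD hintP, ← intervalIntegral.integral_sub hintgy hintgx]
    congr 1
    funext θ
    ring
  have hx' := aux_repr hx0 hx1
  have hy' := aux_repr hy0 hy1
  rw [hx', hy']
  have hgx' : (∫ θ in (0:ℝ)..(π/2),
      ((x / 2 - 1 / 2) * (1 / Real.sqrt (1 - x * Real.sin θ ^ 2))
        + Real.sqrt (1 - x * Real.sin θ ^ 2))) = ∫ θ in (0:ℝ)..(π/2), gx θ := rfl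
  have hgy' : (∫ θ in (0:ℝ)..(π/2),
      ((y / 2 - 1 / 2) * (1 / Real.sqrt (1 - y * Real.sin θ ^ 2))
        + Real.sqrt (1 - y * Real.sin θ ^ 2))) = ∫ θ in (0:ℝ)..(π/2), gy θ := rfl
  rw [hgx', hgy']
  linarith [hsplit, h0, hW0, hWpi, hPpos]

/-- The function `f(x) = ((x/2) - 1/2)·K(x) + E(x)` is monotonically increasing on `[0,1)`. -/
theorem f_strictMonoOn :
    StrictMonoOn (fun x : ℝ => (x / 2 - 1 / 2) * ellipticK x + ellipticE x)
      (Set.Ico (0:ℝ) 1) := by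
  intro x hx y hy hxy
  exact key hx.1 hxy hy.2
end

section
/- For f(x) = ((x/2) - 1/2)·K(x) + E(x) with K, E the complete elliptic integrals of the first and second kind, the values of f on [0,1] satisfy π/4 ≤ f(x) ≤ 1 for all x ∈ [0,1] (with the endpoint value f(1) interpreted as the limit, which equals 1, and f(0) = π/4). -/
open Real Set

/-- For `f(x) = ((x/2) - 1/2)·K(x) + E(x)`, one has `π/4 ≤ f(x) ≤ 1` on `[0,1]`. -/
theorem f_bounds :
    ∀ x ∈ Set.Icc (0:ℝ) 1,
      π / 4 ≤ (x / 2 - 1 / 2) * ellipticK x + ellipticE x ∧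
      (x / 2 - 1 / 2) * ellipticK x + ellipticE x ≤ 1 := by
  rintro x ⟨hx0, hx1⟩
  have hpi2 : (0:ℝ) ≤ π/2 := by positivity
  rcases eq_or_lt_of_le hx1 with h1 | h1
  · -- endpoint x = 1
    subst h1
    have hE : ellipticE 1 = 1 := by
      rw [ellipticE]
      have hcongr : ∀ θ ∈ Set.uIcc (0:ℝ) (π/2),
          Real.sqrt (1 - 1 * Real.sin θ ^ 2) = Real.cos θ := by
        intro θ hθ
        rw [Set.uIcc_of_le hpi2] at hθ
        rw [one_mul, ← Real.cos_sq']
        exact Real.sqrt_sq (Real.cos_nonneg_of_mem_Icc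
          ⟨by linarith [hθ.1, Real.pi_pos], hθ.2⟩)
      rw [intervalIntegral.integral_congr hcongr, integral_cos]
      simp
    rw [hE]
    constructor
    · norm_num
      linarith [Real.pi_le_four]
    · norm_num
  · -- main case x < 1
    have hax : 0 < 1 - x := by linarith
    set w : ℝ → ℝ := fun θ => Real.sqrt (1 - x * Real.sin θ ^ 2) with hw_def
    have hu_pos : ∀ θ : ℝ, 0 < 1 - x * Real.sin θ ^ 2 := by
      intro θ
      nlinarith [Real.sin_sq_le_one θ, sq_nonneg (Real.sin θ)]
    have hu_le : ∀ θ : ℝ, 1 - x * Real.sin θ ^ 2 ≤ 1 := by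
      intro θ
      nlinarith [sq_nonneg (Real.sin θ)]
    have hu_ge : ∀ θ : ℝ, 1 - x ≤ 1 - x * Real.sin θ ^ 2 := by
      intro θ
      nlinarith [Real.sin_sq_le_one θ]
    have hw_pos : ∀ θ, 0 < w θ := fun θ => Real.sqrt_pos.mpr (hu_pos θ)
    have hw_le : ∀ θ, w θ ≤ 1 := fun θ => Real.sqrt_le_one.mpr (hu_le θ)
    have hw_sq : ∀ θ, w θ ^ 2 = 1 - x * Real.sin θ ^ 2 :=
      fun θ => Real.sq_sqrt (hu_pos θ).le
    have hcont_u : Continuous fun θ : ℝ => 1 - x * Real.sin θ ^ 2 := by fun_prop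
    have hcont_w : Continuous w := by
      rw [hw_def]; fun_prop
    have hcont_winv : Continuous fun θ => 1 / w θ :=
      continuous_const.div hcont_w fun θ => (hw_pos θ).ne'
    have hi1 : IntervalIntegrable (fun θ => (x/2 - 1/2) * (1 / w θ))
        MeasureTheory.volume 0 (π/2) :=
      (continuous_const.mul hcont_winv).intervalIntegrable _ _
    have hi2 : IntervalIntegrable w MeasureTheory.volume 0 (π/2) :=
      hcont_w.intervalIntegrable _ _
    -- rewrite f as a single integral
    have hf : (x / 2 - 1 / 2) * ellipticK x + ellipticE x
        = ∫ θ in (0:ℝ)..(π/2), ((x/2 - 1/2) * (1 / w θ) + w θ) := by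
      rw [ellipticK, ellipticE, ← intervalIntegral.integral_const_mul,
        ← intervalIntegral.integral_add hi1 hi2]
    constructor
    · -- lower bound
      rw [hf]
      have hval : ∫ θ in (0:ℝ)..(π/2), ((1 - x * Real.sin θ ^ 2) + (x/2 - 1/2)) = π/4 := by
        have hfun : (fun θ : ℝ => (1 - x * Real.sin θ ^ 2) + (x/2 - 1/2))
            = fun θ : ℝ => (x/2 + 1/2) - x * Real.sin θ ^ 2 := by
          funext θ; ring
        rw [hfun, intervalIntegral.integral_sub (intervalIntegrable_const)
          ((show Continuous fun θ : ℝ => x * Real.sin θ ^ 2 from continuous_const.mul (by fun_prop : Continuous fun θ : ℝ => Real.sin θ ^ 2)).intervalIntegrable _ _),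
          intervalIntegral.integral_const_mul, integral_sin_sq,
          intervalIntegral.integral_const]
        simp [Real.sin_pi_div_two, Real.cos_pi_div_two]
        ring
      rw [← hval]
      apply intervalIntegral.integral_mono_on hpi2
        ((show Continuous fun θ : ℝ => (1 - x * Real.sin θ ^ 2) + (x/2 - 1/2) from hcont_u.add continuous_const).intervalIntegrable _ _)
        (hi1.add hi2)
      intro θ _
      have h1w := hw_pos θ
      have h2w := hw_le θ
      have h3w := hw_sq θ
      have h4 : 1 - x ≤ w θ ^ 2 := by rw [h3w]; exact hu_ge θ
      have hkey : (x/2 - 1/2) * (1 / w θ) + w θ - ((1 - x * Real.sin θ ^ 2) + (x/2 - 1/2))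
          = (w θ ^ 2 + (x/2 - 1/2)) * (1 - w θ) / w θ := by
        rw [← h3w]; field_simp; ring
      have h5 : 0 ≤ (w θ ^ 2 + (x/2 - 1/2)) * (1 - w θ) / w θ :=
        div_nonneg (mul_nonneg (by linarith) (by linarith)) h1w.le
      linarith
    · -- upper bound
      rw [hf]
      set k : ℝ := (1 - x) / 2 with hk_def
      set F : ℝ → ℝ := fun θ => k * (Real.sin θ * Real.cos θ / (w θ + Real.cos θ)) with hF_def
      set g : ℝ → ℝ := fun θ => Real.cos θ - ((x/2 - 1/2) * (1 / w θ) + w θ)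
        - k * (Real.cos θ ^ 2 / (w θ + Real.cos θ)) with hg_def
      have hden_pos : ∀ θ ∈ Set.uIcc (0:ℝ) (π/2), 0 < w θ + Real.cos θ := by
        intro θ hθ
        rw [Set.uIcc_of_le hpi2] at hθ
        have hc : 0 ≤ Real.cos θ := Real.cos_nonneg_of_mem_Icc
          ⟨by linarith [hθ.1, Real.pi_pos], hθ.2⟩
        linarith [hw_pos θ]
      have hd : ∀ θ ∈ Set.uIcc (0:ℝ) (π/2), HasDerivAt F (g θ) θ := by
        intro θ hθ
        have hden := hden_pos θ hθ
        have hs := Real.hasDerivAt_sin θ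
        have hc := Real.hasDerivAt_cos θ
        have hnum : HasDerivAt (fun t => Real.sin t * Real.cos t)
            (Real.cos θ * Real.cos θ + Real.sin θ * (-Real.sin θ)) θ := hs.mul hc
        have hu' : HasDerivAt (fun t : ℝ => 1 - x * Real.sin t ^ 2)
            (-(x * (2 * Real.sin θ ^ 1 * Real.cos θ))) θ := by
          simpa using ((hs.pow 2).const_mul x).const_sub 1
        have hw' : HasDerivAt w
            ((-(x * (2 * Real.sin θ ^ 1 * Real.cos θ))) / (2 * w θ)) θ :=
          hu'.sqrt (hu_pos θ).ne'
        have hdenD : HasDerivAt (fun t => w t + Real.cos t)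
            ((-(x * (2 * Real.sin θ ^ 1 * Real.cos θ))) / (2 * w θ) + (-Real.sin θ)) θ :=
          hw'.add hc
        have hdiv := (hnum.div hdenD hden.ne')
        have hFder := hdiv.const_mul k
        refine HasDerivAt.congr_deriv hFder ?_
        symm
        have h3w := hw_sq θ
        have hWpos := hw_pos θ
        have hsc := Real.sin_sq_add_cos_sq θ
        rw [hg_def, hk_def]
        field_simp
        linear_combination (norm := ring1) (-2 * w θ * (w θ + Real.cos θ) - (1 - x) * Real.cos θ ^ 2) * h3w + (2 * x * w θ * (w θ + Real.cos θ) + (1 - x) * w θ ^ 2) * hsc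
      have hcont_den : ContinuousOn (fun θ => w θ + Real.cos θ) (Set.uIcc (0:ℝ) (π/2)) :=
        (hcont_w.add Real.continuous_cos).continuousOn
      have hcont_q : ContinuousOn (fun θ => k * (Real.cos θ ^ 2 / (w θ + Real.cos θ)))
          (Set.uIcc (0:ℝ) (π/2)) :=
        continuousOn_const.mul (((Real.continuous_cos.pow 2).continuousOn).div hcont_den
          (fun θ hθ => (hden_pos θ hθ).ne'))
      have hcont_g : ContinuousOn g (Set.uIcc (0:ℝ) (π/2)) := by
        rw [hg_def]
        exact ((Real.continuous_cos.sub ((continuous_const.mul hcont_winv).add hcont_w)).continuousOn).sub hcont_q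
      have hgi : IntervalIntegrable g MeasureTheory.volume 0 (π/2) :=
        hcont_g.intervalIntegrable
      have hqi : IntervalIntegrable (fun θ => k * (Real.cos θ ^ 2 / (w θ + Real.cos θ)))
          MeasureTheory.volume 0 (π/2) := hcont_q.intervalIntegrable
      have hg0 : ∫ θ in (0:ℝ)..(π/2), g θ = 0 := by
        rw [intervalIntegral.integral_eq_sub_of_hasDerivAt hd hgi]
        simp [hF_def, Real.cos_pi_div_two, Real.sin_pi_div_two]
      have hq_nonneg : 0 ≤ ∫ θ in (0:ℝ)..(π/2), k * (Real.cos θ ^ 2 / (w θ + Real.cos θ)) := by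
        apply intervalIntegral.integral_nonneg hpi2
        intro θ hθ
        have hden := hden_pos θ (by rwa [Set.uIcc_of_le hpi2])
        have hk0 : (0:ℝ) ≤ k := by rw [hk_def]; linarith
        positivity
      have hkey2 : ∫ θ in (0:ℝ)..(π/2), (Real.cos θ - ((x/2 - 1/2) * (1 / w θ) + w θ))
          = ∫ θ in (0:ℝ)..(π/2), (g θ + k * (Real.cos θ ^ 2 / (w θ + Real.cos θ))) := by
        apply intervalIntegral.integral_congr
        intro θ _
        rw [hg_def]
        ring
      have hcos1 : ∫ θ in (0:ℝ)..(π/2), Real.cos θ = 1 := by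
        rw [integral_cos]; simp
      have hfinal : (∫ θ in (0:ℝ)..(π/2), Real.cos θ)
          - ∫ θ in (0:ℝ)..(π/2), ((x/2 - 1/2) * (1 / w θ) + w θ)
          = (∫ θ in (0:ℝ)..(π/2), g θ)
            + ∫ θ in (0:ℝ)..(π/2), k * (Real.cos θ ^ 2 / (w θ + Real.cos θ)) := by
        rw [← intervalIntegral.integral_sub (Real.continuous_cos.intervalIntegrable _ _)
          (hi1.add hi2), hkey2, intervalIntegral.integral_add hgi hqi]
      rw [hcos1, hg0] at hfinal
      linarith
end

section
/- Let {X_N} be a sequence of nonnegative random variables such that Var[X_N]/E[X_N]² → 0 as N → ∞, with E[X_N] → ∞. Then E[log₂(1 + X_N)] is asymptotically equivalent to log₂(1 + E[X_N]), i.e., E[log₂(1 + X_N)]/log₂(1 + E[X_N]) → 1 as N → ∞. -/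
/-!
The tangent line of the concave function `log (1 + x)` at `m = E[X]` bounds `E[log (1 + X)]` above
by `log (1 + m)`. Below, `log (1 + X) ≥ log (1 + m / 2) ≥ log (1 + m) - log 2` where `X ≥ m / 2`,
while the Chebyshev weight `4 (X - m)² / m²` is at least `1` where `X < m / 2`; so pointwise
`log (1 + X) ≥ log (1 + m) (1 - 4 (X - m)² / m²) - log 2`, and taking expectations
`E[log (1 + X)] / log (1 + m) ≥ 1 - log 2 / log (1 + m) - 4 Var[X] / m² → 1`.
-/

open MeasureTheory ProbabilityTheory Filter Real

namespace Real

lemma log_one_add_le_tangent {x m : ℝ} (hx : -1 < x) (hm : -1 < m) :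
    log (1 + x) ≤ log (1 + m) + (x - m) / (1 + m) := by
  have hm1 : 0 < 1 + m := by linarith
  have h := log_le_sub_one_of_pos (div_pos (by linarith : (0 : ℝ) < 1 + x) hm1)
  rw [log_div (by linarith) hm1.ne'] at h
  have e : (1 + x) / (1 + m) - 1 = (x - m) / (1 + m) := by field_simp; ring
  linarith

lemma log_one_add_sub_log_two_sub_mul_sq_le {x m : ℝ} (hx : 0 ≤ x) (hm : 0 < m) :
    log (1 + m) - log 2 - 4 * log (1 + m) / m ^ 2 * (x - m) ^ 2 ≤ log (1 + x) := by
  have hlogm : 0 ≤ log (1 + m) := log_nonneg (by linarith)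
  have hlog2 : 0 < log 2 := log_pos one_lt_two
  rcases lt_or_ge x (m / 2) with hsmall | hlarge
  · have hsq : m ^ 2 ≤ 4 * (x - m) ^ 2 := by nlinarith
    have : log (1 + m) ≤ 4 * log (1 + m) / m ^ 2 * (x - m) ^ 2 := by
      rw [div_mul_eq_mul_div, mul_assoc, le_div_iff₀ (by positivity)]
      nlinarith [mul_le_mul_of_nonneg_left hsq hlogm]
    linarith [log_nonneg (by linarith : (1 : ℝ) ≤ 1 + x)]
  · have hhalf : log (1 + m) - log 2 ≤ log (1 + x) := by
      rw [← log_div (by linarith) two_ne_zero]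
      exact log_le_log (by linarith) (by linarith)
    have : 0 ≤ 4 * log (1 + m) / m ^ 2 * (x - m) ^ 2 := by positivity
    linarith

end Real

section

variable {Ω : Type*} [MeasurableSpace Ω] {μ : Measure Ω} {Y : Ω → ℝ}

lemma integrable_log_one_add (hY : Integrable Y μ) (hpos : ∀ ω, 0 ≤ Y ω) :
    Integrable (fun ω => log (1 + Y ω)) μ := by
  refine hY.mono' ((measurable_log.comp (measurable_const_add 1)).comp_aemeasurable
    hY.aemeasurable).aestronglyMeasurable (.of_forall fun ω => ?_)
  rw [norm_of_nonneg (log_nonneg (by linarith [hpos ω]))]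
  linarith [log_le_sub_one_of_pos (by linarith [hpos ω] : 0 < 1 + Y ω)]

variable [IsProbabilityMeasure μ]

lemma integral_log_one_add_le (hY : Integrable Y μ) (hpos : ∀ ω, 0 ≤ Y ω) :
    ∫ ω, log (1 + Y ω) ∂μ ≤ log (1 + ∫ ω, Y ω ∂μ) := by
  set m := ∫ ω, Y ω ∂μ
  have hm : 0 ≤ m := integral_nonneg hpos
  have hslope : Integrable (fun ω => (Y ω - m) / (1 + m)) μ :=
    (hY.sub (integrable_const m)).div_const _
  calc ∫ ω, log (1 + Y ω) ∂μ ≤ ∫ ω, log (1 + m) + (Y ω - m) / (1 + m) ∂μ :=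
        integral_mono (integrable_log_one_add hY hpos) ((integrable_const _).add hslope)
          fun ω => log_one_add_le_tangent (by linarith [hpos ω]) (by linarith)
    _ = log (1 + m) := by
        rw [integral_add (integrable_const _) hslope, integral_div,
          integral_sub hY (integrable_const m)]
        simp [m]

lemma log_one_add_integral_sub_le_integral_log_one_add (hY : MemLp Y 2 μ)
    (hpos : ∀ ω, 0 ≤ Y ω) (hm : 0 < ∫ ω, Y ω ∂μ) :
    log (1 + ∫ ω, Y ω ∂μ) - log 2 - 4 * log (1 + ∫ ω, Y ω ∂μ) / (∫ ω, Y ω ∂μ) ^ 2 * variance Y μ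
      ≤ ∫ ω, log (1 + Y ω) ∂μ := by
  set m := ∫ ω, Y ω ∂μ
  have hsq : Integrable (fun ω => (Y ω - m) ^ 2) μ := (hY.sub (memLp_const m)).integrable_sq
  calc log (1 + m) - log 2 - 4 * log (1 + m) / m ^ 2 * variance Y μ
      = ∫ ω, log (1 + m) - log 2 - 4 * log (1 + m) / m ^ 2 * (Y ω - m) ^ 2 ∂μ := by
        rw [integral_sub (integrable_const _) (hsq.const_mul _), integral_const_mul,
          variance_eq_integral hY.aemeasurable]
        simp [m]
    _ ≤ ∫ ω, log (1 + Y ω) ∂μ :=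
        integral_mono ((integrable_const _).sub (hsq.const_mul _))
          (integrable_log_one_add (hY.integrable one_le_two) hpos)
          fun ω => log_one_add_sub_log_two_sub_mul_sq_le (hpos ω) hm

lemma integral_logb_one_add_div_logb_mem_Icc (hY : MemLp Y 2 μ) (hpos : ∀ ω, 0 ≤ Y ω)
    (hm : 0 < ∫ ω, Y ω ∂μ) :
    (∫ ω, logb 2 (1 + Y ω) ∂μ) / logb 2 (1 + ∫ ω, Y ω ∂μ) ∈ Set.Icc
      (1 - log 2 / log (1 + ∫ ω, Y ω ∂μ) - 4 * (variance Y μ / (∫ ω, Y ω ∂μ) ^ 2)) 1 := by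
  set m := ∫ ω, Y ω ∂μ
  have hlogm : 0 < log (1 + m) := log_pos (by linarith)
  simp only [logb, integral_div, div_div_div_cancel_right₀ (log_pos one_lt_two).ne']
  refine ⟨?_, (div_le_one hlogm).2 (integral_log_one_add_le (hY.integrable one_le_two) hpos)⟩
  rw [le_div_iff₀ hlogm]
  calc _ = log (1 + m) - log 2 - 4 * log (1 + m) / m ^ 2 * variance Y μ := by
        field_simp
    _ ≤ _ := log_one_add_integral_sub_le_integral_log_one_add hY hpos hm

end

theorem rate_asymptotic_equivalence_general {Ω : Type*} [MeasurableSpace Ω] (μ : Measure Ω)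
    [IsProbabilityMeasure μ] (X : ℕ → Ω → ℝ)
    (hpos : ∀ N, ∀ ω, 0 ≤ X N ω)
    (hL2 : ∀ N, MemLp (X N) 2 μ)
    (hvar : Tendsto (fun N => variance (X N) μ / (∫ ω, X N ω ∂μ) ^ 2) atTop (nhds 0))
    (hmean : Tendsto (fun N => ∫ ω, X N ω ∂μ) atTop atTop) :
    Tendsto (fun N =>
      (∫ ω, Real.logb 2 (1 + X N ω) ∂μ) / Real.logb 2 (1 + ∫ ω, X N ω ∂μ))
      atTop (nhds 1) := by
  have hlog_mean : Tendsto (fun N => log (1 + ∫ ω, X N ω ∂μ)) atTop atTop :=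
    tendsto_log_atTop.comp (tendsto_atTop_add_const_left _ 1 hmean)
  have hlower : Tendsto (fun N => 1 - log 2 / log (1 + ∫ ω, X N ω ∂μ) -
      4 * (variance (X N) μ / (∫ ω, X N ω ∂μ) ^ 2)) atTop (nhds 1) := by
    simpa using ((hlog_mean.const_div_atTop (log 2)).const_sub 1).sub (hvar.const_mul 4)
  refine tendsto_of_tendsto_of_tendsto_of_le_of_le' hlower tendsto_const_nhds ?_ ?_ <;>
  filter_upwards [hmean.eventually_gt_atTop 0] with N hN
  · exact (integral_logb_one_add_div_logb_mem_Icc (hL2 N) (hpos N) hN).1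
  · exact (integral_logb_one_add_div_logb_mem_Icc (hL2 N) (hpos N) hN).2

/-- If nonnegative random variables `X_N` satisfy `Var[X_N]/E[X_N]² → 0` and
`E[X_N] → ∞`, then `E[log₂(1 + X_N)] ∼ log₂(1 + E[X_N])`, i.e. their ratio tends to 1. -/
theorem rate_asymptotic_equivalence {Ω : Type*} [MeasurableSpace Ω] (μ : Measure Ω)
    [IsProbabilityMeasure μ] (X : ℕ → Ω → ℝ)
    (hmeas : ∀ N, Measurable (X N))
    (hpos : ∀ N, ∀ ω, 0 ≤ X N ω)
    (hL2 : ∀ N, MemLp (X N) 2 μ)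
    (hvar : Tendsto (fun N => variance (X N) μ / (∫ ω, X N ω ∂μ) ^ 2) atTop (nhds 0))
    (hmean : Tendsto (fun N => ∫ ω, X N ω ∂μ) atTop atTop) :
    Tendsto (fun N =>
      (∫ ω, Real.logb 2 (1 + X N ω) ∂μ) / Real.logb 2 (1 + ∫ ω, X N ω ∂μ))
      atTop (nhds 1) :=
  rate_asymptotic_equivalence_general μ X hpos hL2 hvar hmean
end

section
/- With phase errors symmetric about zero with mean cosine ε_t, the mean composite channel gain satisfies E[H_t] = N(1 − ε_t²) + ε_t²·tr(R̄ R̄), where R̄ is the N×N matrix with entries R̄_{n,i} = E[|h_n||h_i|] (equal for both channel vectors). In particular, by π/4 ≤ R̄_{n,i} ≤ 1 for n ≠ i and R̄_{n,n} = 1, one has N + (π²/16)N(N−1)ε_t² ≤ E[H_t] < N + N(N−1)ε_t². -/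
/-!
Writing `a n = |g n| |h n|`, the gain is `|∑ a n e^{jφ n}|² = ∑ n, ∑ i, a n a i cos (φ n - φ i)`.
Independence of the phases from the channels, and of `g` from `h`, factors the mean of each term
into `E[cos (φ n - φ i)] · R̄ n i ²`. Symmetric phases have `E[sin φ n] = 0`, so for `n ≠ i`
independence gives `E[cos (φ n - φ i)] = E[cos φ n] E[cos φ i] = ε²`, while the diagonal terms
contribute `1`. The bounds then follow from `π/4 ≤ R̄ n i < 1` off the diagonal.
-/

open MeasureTheory ProbabilityTheory Real

section Algebra

variable {ι : Type*} [Fintype ι]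

lemma norm_sq_sum_ofReal_mul_exp_I_mul (a θ : ι → ℝ) :
    ‖∑ n, (a n : ℂ) * Complex.exp (Complex.I * θ n)‖ ^ 2
      = ∑ n, ∑ i, a n * a i * cos (θ n - θ i) := by
  have hterm : ∀ n, (a n : ℂ) * Complex.exp (Complex.I * θ n)
      = ⟨a n * cos (θ n), a n * sin (θ n)⟩ := fun n => by
    rw [mul_comm Complex.I, Complex.exp_mul_I]
    apply Complex.ext <;> simp [Complex.cos_ofReal_re, Complex.sin_ofReal_re]
  simp_rw [hterm, Complex.sq_norm, Complex.normSq_apply, Complex.re_sum, Complex.im_sum,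
    Finset.sum_mul_sum, ← Finset.sum_add_distrib, cos_sub]
  exact Finset.sum_congr rfl fun n _ => Finset.sum_congr rfl fun i _ => by ring

lemma sum_sum_ite_mul_of_diag_eq_one [DecidableEq ι] (a b : ℝ) (f : ι → ι → ℝ)
    (hdiag : ∀ n, f n n = 1) :
    ∑ n, ∑ i, (if n = i then a else b) * f n i
      = Fintype.card ι * (a - b) + b * ∑ n, ∑ i, f n i := by
  have hsplit : ∀ n i, (if n = i then a else b) * f n i
      = b * f n i + if n = i then a - b else 0 := fun n i => by
    split_ifs with h
    · subst h; rw [hdiag]; ring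
    · ring
  simp only [hsplit, Finset.sum_add_distrib, Finset.sum_ite_eq, Finset.mem_univ, if_true,
    Finset.sum_const, Finset.card_univ, nsmul_eq_mul, ← Finset.mul_sum]
  ring

lemma card_add_sq_mul_le_sum_sum_sq {R : ι → ι → ℝ} {c : ℝ} (hc : 0 ≤ c)
    (hdiag : ∀ n, R n n = 1) (hoff : ∀ n i, n ≠ i → c ≤ R n i) :
    Fintype.card ι + c ^ 2 * Fintype.card ι * (Fintype.card ι - 1) ≤ ∑ n, ∑ i, R n i ^ 2 := by
  classical
  have hconst := sum_sum_ite_mul_of_diag_eq_one 1 (c ^ 2) (fun _ _ : ι => 1) fun _ => rfl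
  simp only [mul_one, Finset.sum_const, Finset.card_univ, nsmul_eq_mul] at hconst
  calc _ = ∑ n : ι, ∑ i : ι, if n = i then (1 : ℝ) else c ^ 2 := by rw [hconst]; ring
    _ ≤ _ := Finset.sum_le_sum fun n _ => Finset.sum_le_sum fun i _ => by
      split_ifs with h
      · rw [h, hdiag, one_pow]
      · exact pow_le_pow_left₀ hc (hoff n i h) 2

lemma sum_sum_sq_lt_card_mul_card [Nontrivial ι] {R : ι → ι → ℝ}
    (hdiag : ∀ n, R n n = 1) (hoff : ∀ n i, n ≠ i → 0 ≤ R n i ∧ R n i < 1) :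
    ∑ n, ∑ i, R n i ^ 2 < Fintype.card ι * Fintype.card ι := by
  have hle : ∀ n i, R n i ^ 2 ≤ 1 := fun n i => by
    by_cases h : n = i
    · rw [h, hdiag, one_pow]
    · obtain ⟨h0, h1⟩ := hoff n i h
      nlinarith
  obtain ⟨n₀, i₀, hne⟩ := exists_pair_ne ι
  have hlt : R n₀ i₀ ^ 2 < 1 := by
    obtain ⟨h0, h1⟩ := hoff n₀ i₀ hne
    nlinarith
  calc ∑ n, ∑ i, R n i ^ 2 < ∑ _n : ι, ∑ _i : ι, (1 : ℝ) :=
        Finset.sum_lt_sum (fun n _ => Finset.sum_le_sum fun i _ => hle n i)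
          ⟨n₀, Finset.mem_univ _,
            Finset.sum_lt_sum (fun i _ => hle n₀ i) ⟨i₀, Finset.mem_univ _, hlt⟩⟩
    _ = _ := by simp

end Algebra

section Probability

variable {Ω : Type*} [MeasurableSpace Ω] {μ : Measure Ω}

lemma integral_comp_eq_zero_of_map_eq_map_neg {X : Ω → ℝ} (hX : AEMeasurable X μ)
    (hsymm : μ.map X = μ.map (fun ω => -X ω)) {f : ℝ → ℝ} (hf : Measurable f)
    (hodd : ∀ x, f (-x) = -f x) :
    ∫ ω, f (X ω) ∂μ = 0 := by
  have h : ∫ ω, f (X ω) ∂μ = ∫ ω, f (-X ω) ∂μ := by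
    rw [← integral_map hX hf.aestronglyMeasurable, hsymm,
      integral_map (φ := fun ω => -X ω) hX.neg hf.aestronglyMeasurable]
  simp_rw [hodd, integral_neg] at h
  linarith

lemma ProbabilityTheory.IndepFun.integral_cos_sub [IsFiniteMeasure μ] {X Y : Ω → ℝ}
    (hXY : IndepFun X Y μ) (hX : AEMeasurable X μ) (hY : AEMeasurable Y μ) :
    ∫ ω, cos (X ω - Y ω) ∂μ
      = (∫ ω, cos (X ω) ∂μ) * (∫ ω, cos (Y ω) ∂μ)
        + (∫ ω, sin (X ω) ∂μ) * (∫ ω, sin (Y ω) ∂μ) := by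
  have hbdd : ∀ {F : ℝ → ℝ} {G : ℝ → ℝ}, Continuous F → Continuous G → (∀ x, |F x| ≤ 1) →
      (∀ x, |G x| ≤ 1) → Integrable (fun ω => F (X ω) * G (Y ω)) μ := by
    intro F G hF hG hF1 hG1
    refine Integrable.of_bound ((hF.measurable.comp_aemeasurable hX).mul
      (hG.measurable.comp_aemeasurable hY)).aestronglyMeasurable 1
      (Filter.Eventually.of_forall fun ω => ?_)
    rw [norm_mul, Real.norm_eq_abs, Real.norm_eq_abs]
    exact mul_le_one₀ (hF1 _) (abs_nonneg _) (hG1 _)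
  have hcos : IndepFun (fun ω => cos (X ω)) (fun ω => cos (Y ω)) μ :=
    hXY.comp measurable_cos measurable_cos
  have hsin : IndepFun (fun ω => sin (X ω)) (fun ω => sin (Y ω)) μ :=
    hXY.comp measurable_sin measurable_sin
  simp_rw [cos_sub]
  rw [integral_add (hbdd continuous_cos continuous_cos abs_cos_le_one abs_cos_le_one)
      (hbdd continuous_sin continuous_sin abs_sin_le_one abs_sin_le_one),
    hcos.integral_fun_mul_eq_mul_integral
      hX.cos.aestronglyMeasurable hY.cos.aestronglyMeasurable,
    hsin.integral_fun_mul_eq_mul_integral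
      hX.sin.aestronglyMeasurable hY.sin.aestronglyMeasurable]

lemma integral_cos_sub_of_iIndepFun [IsProbabilityMeasure μ] {ι : Type*} [DecidableEq ι]
    {φ : ι → Ω → ℝ} {ε : ℝ} (hφ : ∀ n, AEMeasurable (φ n) μ) (hindep : iIndepFun φ μ)
    (hsymm : ∀ n, μ.map (φ n) = μ.map (fun ω => -φ n ω))
    (hcos : ∀ n, ∫ ω, cos (φ n ω) ∂μ = ε) (n i : ι) :
    ∫ ω, cos (φ n ω - φ i ω) ∂μ = if n = i then 1 else ε ^ 2 := by
  split_ifs with h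
  · simp [h]
  · have hsin : ∀ n, ∫ ω, sin (φ n ω) ∂μ = 0 := fun n =>
      integral_comp_eq_zero_of_map_eq_map_neg (hφ n) (hsymm n) measurable_sin sin_neg
    rw [(hindep.indepFun h).integral_cos_sub (hφ n) (hφ i), hcos, hcos, hsin, hsin]
    ring

lemma integral_norm_mul_norm_mul_cos_sub_of_indepFun {ι E : Type*} [NormedAddCommGroup E]
    [MeasurableSpace E] [OpensMeasurableSpace E] {g h : ι → Ω → E} {φ : ι → Ω → ℝ}
    (hg : ∀ n, AEMeasurable (g n) μ) (hh : ∀ n, AEMeasurable (h n) μ)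
    (hφ : ∀ n, AEMeasurable (φ n) μ)
    (hφgh : IndepFun (fun ω n => φ n ω) (fun ω n => (g n ω, h n ω)) μ)
    (hgh : IndepFun (fun ω n => g n ω) (fun ω n => h n ω) μ) (n i : ι) :
    ∫ ω, ‖g n ω‖ * ‖h n ω‖ * (‖g i ω‖ * ‖h i ω‖) * cos (φ n ω - φ i ω) ∂μ
      = (∫ ω, cos (φ n ω - φ i ω) ∂μ) * (∫ ω, ‖g n ω‖ * ‖g i ω‖ ∂μ)
          * ∫ ω, ‖h n ω‖ * ‖h i ω‖ ∂μ := by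
  have hamp : IndepFun (fun ω => ‖g n ω‖ * ‖g i ω‖) (fun ω => ‖h n ω‖ * ‖h i ω‖) μ :=
    hgh.comp (φ := fun v : ι → E => ‖v n‖ * ‖v i‖) (ψ := fun v : ι → E => ‖v n‖ * ‖v i‖)
      (by fun_prop) (by fun_prop)
  have hphase : IndepFun (fun ω => cos (φ n ω - φ i ω))
      (fun ω => ‖g n ω‖ * ‖g i ω‖ * (‖h n ω‖ * ‖h i ω‖)) μ :=
    hφgh.comp (φ := fun v : ι → ℝ => cos (v n - v i))
      (ψ := fun w : ι → E × E => ‖(w n).1‖ * ‖(w i).1‖ * (‖(w n).2‖ * ‖(w i).2‖))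
      (by fun_prop) (by fun_prop)
  calc _ = ∫ ω, cos (φ n ω - φ i ω) * (‖g n ω‖ * ‖g i ω‖ * (‖h n ω‖ * ‖h i ω‖)) ∂μ := by
        congr 1; ext ω; ring
    _ = _ := by
      rw [hphase.integral_fun_mul_eq_mul_integral (by fun_prop) (by fun_prop),
        hamp.integral_fun_mul_eq_mul_integral (by fun_prop) (by fun_prop), mul_assoc]

end Probability

theorem mean_gain_with_phase_errors_general {Ω : Type*} [MeasurableSpace Ω] (μ : Measure Ω)
    [IsProbabilityMeasure μ] (N : ℕ) (hN : 2 ≤ N)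
    (g h : Fin N → Ω → ℂ) (φ : Fin N → Ω → ℝ) (εt : ℝ) (Rbar : Fin N → Fin N → ℝ)
    (hgmeas : ∀ n, Measurable (g n)) (hhmeas : ∀ n, Measurable (h n))
    (hφmeas : ∀ n, Measurable (φ n))
    (hL2 : ∀ n, MemLp (fun ω => ‖g n ω‖ * ‖h n ω‖) 2 μ)
    (hεt : ∀ n, ∫ ω, Real.cos (φ n ω) ∂μ = εt) (hεne : εt ≠ 0)
    (hsymm : ∀ n, Measure.map (φ n) μ = Measure.map (fun ω => -(φ n ω)) μ)
    (hiid : iIndepFun φ μ)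
    (hφindep : IndepFun (fun ω n => φ n ω) (fun ω n => (g n ω, h n ω)) μ)
    (hghindep : IndepFun (fun ω n => g n ω) (fun ω n => h n ω) μ)
    (hRg : ∀ n i, ∫ ω, ‖g n ω‖ * ‖g i ω‖ ∂μ = Rbar n i)
    (hRh : ∀ n i, ∫ ω, ‖h n ω‖ * ‖h i ω‖ ∂μ = Rbar n i)
    (hdiag : ∀ n, Rbar n n = 1)
    (hbounds : ∀ n i, n ≠ i → π / 4 ≤ Rbar n i ∧ Rbar n i < 1) :
    (∫ ω, ‖∑ n : Fin N,
        ((‖g n ω‖ * ‖h n ω‖ : ℝ) : ℂ) *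
          Complex.exp (Complex.I * (φ n ω : ℝ))‖ ^ 2 ∂μ)
      = N * (1 - εt ^ 2) + εt ^ 2 * ∑ n : Fin N, ∑ i : Fin N, Rbar n i ^ 2 ∧
    (N : ℝ) + π ^ 2 / 16 * N * (N - 1) * εt ^ 2 ≤
      (∫ ω, ‖∑ n : Fin N,
        ((‖g n ω‖ * ‖h n ω‖ : ℝ) : ℂ) *
          Complex.exp (Complex.I * (φ n ω : ℝ))‖ ^ 2 ∂μ) ∧
    (∫ ω, ‖∑ n : Fin N,
        ((‖g n ω‖ * ‖h n ω‖ : ℝ) : ℂ) *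
          Complex.exp (Complex.I * (φ n ω : ℝ))‖ ^ 2 ∂μ)
      < (N : ℝ) + N * (N - 1) * εt ^ 2 := by
  have hterm : ∀ n i, ∫ ω, ‖g n ω‖ * ‖h n ω‖ * (‖g i ω‖ * ‖h i ω‖) * cos (φ n ω - φ i ω) ∂μ
      = (if n = i then 1 else εt ^ 2) * Rbar n i ^ 2 := fun n i => by
    rw [integral_norm_mul_norm_mul_cos_sub_of_indepFun (fun n => (hgmeas n).aemeasurable)
      (fun n => (hhmeas n).aemeasurable) (fun n => (hφmeas n).aemeasurable) hφindep hghindep,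
      integral_cos_sub_of_iIndepFun (fun n => (hφmeas n).aemeasurable) hiid hsymm hεt, hRg, hRh]
    ring
  have hint : ∀ n i, Integrable
      (fun ω => ‖g n ω‖ * ‖h n ω‖ * (‖g i ω‖ * ‖h i ω‖) * cos (φ n ω - φ i ω)) μ := fun n i =>
    ((hL2 n).integrable_mul (hL2 i)).mul_bdd (by fun_prop)
      (ae_of_all _ fun ω => (norm_eq_abs _).trans_le (abs_cos_le_one _))
  have hmean : ∫ ω, ‖∑ n : Fin N, ((‖g n ω‖ * ‖h n ω‖ : ℝ) : ℂ) *
        Complex.exp (Complex.I * (φ n ω : ℝ))‖ ^ 2 ∂μ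
      = N * (1 - εt ^ 2) + εt ^ 2 * ∑ n : Fin N, ∑ i : Fin N, Rbar n i ^ 2 := by
    simp_rw [norm_sq_sum_ofReal_mul_exp_I_mul]
    rw [integral_finsetSum _ fun n _ => integrable_finsetSum _ fun i _ => hint n i]
    simp_rw [integral_finsetSum _ fun i _ => hint _ i, hterm]
    rw [sum_sum_ite_mul_of_diag_eq_one _ _ _ fun n => by rw [hdiag, one_pow], Fintype.card_fin]
  have : Nontrivial (Fin N) := Fin.nontrivial_iff_two_le.mpr hN
  have hπ : 0 ≤ π / 4 := by positivity
  have hlow := card_add_sq_mul_le_sum_sum_sq hπ hdiag fun n i hne => (hbounds n i hne).1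
  have hup := sum_sum_sq_lt_card_mul_card hdiag fun n i hne =>
    ⟨hπ.trans (hbounds n i hne).1, (hbounds n i hne).2⟩
  rw [Fintype.card_fin, div_pow] at hlow
  rw [Fintype.card_fin] at hup
  have hε : 0 < εt ^ 2 := by positivity
  refine ⟨hmean, ?_, ?_⟩ <;> rw [hmean] <;> nlinarith

/-- With phase errors symmetric about zero with mean cosine `ε_t`, independent of the
channels, the mean composite channel gain satisfies
`E[H_t] = N(1 − ε_t²) + ε_t²·tr(R̄R̄)`, where `R̄_{n,i} = E[|h_n||h_i|] = E[|g_n||g_i|]`;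
and with `π/4 ≤ R̄_{n,i} < 1` for `n ≠ i`, `R̄_{n,n} = 1`, one gets
`N + (π²/16)N(N−1)ε_t² ≤ E[H_t] < N + N(N−1)ε_t²`. -/
theorem mean_gain_with_phase_errors {Ω : Type*} [MeasurableSpace Ω] (μ : Measure Ω)
    [IsProbabilityMeasure μ] (N : ℕ) (hN : 2 ≤ N)
    (g h : Fin N → Ω → ℂ) (φ : Fin N → Ω → ℝ) (εt : ℝ) (Rbar : Fin N → Fin N → ℝ)
    (hgmeas : ∀ n, Measurable (g n)) (hhmeas : ∀ n, Measurable (h n))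
    (hφmeas : ∀ n, Measurable (φ n))
    (hL2 : ∀ n, MemLp (fun ω => ‖g n ω‖ * ‖h n ω‖) 2 μ)
    (hεt : ∀ n, ∫ ω, Real.cos (φ n ω) ∂μ = εt) (hεne : εt ≠ 0)
    (hsymm : ∀ n, Measure.map (φ n) μ = Measure.map (fun ω => -(φ n ω)) μ)
    (hiid : iIndepFun φ μ)
    (hid : ∀ n m, IdentDistrib (φ n) (φ m) μ μ)
    (hφindep : IndepFun (fun ω n => φ n ω) (fun ω n => (g n ω, h n ω)) μ)
    (hghindep : IndepFun (fun ω n => g n ω) (fun ω n => h n ω) μ)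
    (hRg : ∀ n i, ∫ ω, ‖g n ω‖ * ‖g i ω‖ ∂μ = Rbar n i)
    (hRh : ∀ n i, ∫ ω, ‖h n ω‖ * ‖h i ω‖ ∂μ = Rbar n i)
    (hdiag : ∀ n, Rbar n n = 1)
    (hbounds : ∀ n i, n ≠ i → π / 4 ≤ Rbar n i ∧ Rbar n i < 1) :
    (∫ ω, ‖∑ n : Fin N,
        ((‖g n ω‖ * ‖h n ω‖ : ℝ) : ℂ) *
          Complex.exp (Complex.I * (φ n ω : ℝ))‖ ^ 2 ∂μ)
      = N * (1 - εt ^ 2) + εt ^ 2 * ∑ n : Fin N, ∑ i : Fin N, Rbar n i ^ 2 ∧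
    (N : ℝ) + π ^ 2 / 16 * N * (N - 1) * εt ^ 2 ≤
      (∫ ω, ‖∑ n : Fin N,
        ((‖g n ω‖ * ‖h n ω‖ : ℝ) : ℂ) *
          Complex.exp (Complex.I * (φ n ω : ℝ))‖ ^ 2 ∂μ) ∧
    (∫ ω, ‖∑ n : Fin N,
        ((‖g n ω‖ * ‖h n ω‖ : ℝ) : ℂ) *
          Complex.exp (Complex.I * (φ n ω : ℝ))‖ ^ 2 ∂μ)
      < (N : ℝ) + N * (N - 1) * εt ^ 2 :=
  mean_gain_with_phase_errors_general μ N hN g h φ εt Rbar hgmeas hhmeas hφmeas hL2 hεt hεne hsymm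
    hiid hφindep hghindep hRg hRh hdiag hbounds
end

section
/- As γ₀ → ∞, the approximate NOMA sum rate S_NOMA = R_t⁺ + R_r⁺ exceeds the approximate OMA sum rate S_OMA = R̃_t⁺ + R̃_r⁺ if α⁴ε_t²η_t > ε_r²η_r, and S_NOMA < S_OMA if α⁴ε_t²η_t < ε_r²η_r (for all sufficiently large γ₀). -/
open Real Filter Topology

/-- For large transmit SNR `γ₀`, the approximate NOMA sum rate
`S_NOMA(γ₀) = R_t⁺ + R_r⁺` exceeds the approximate OMA sum rate
`S_OMA(γ₀) = R̃_t⁺ + R̃_r⁺` if `α⁴ε_t²η_t > ε_r²η_r`, and is smaller if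
`α⁴ε_t²η_t < ε_r²η_r`. Here, with `C_t = π²N²ε_t²η_t/16` and `C_r = π²N²ε_r²η_r/16`:
`R_t⁺ = log₂(1+γ₀C_t q_t²α²)`, `R_r⁺ = log₂(1 + q_r²/(q_t² + (γ₀C_rβ²)⁻¹))`,
`R̃_t⁺ = (1/2)log₂(1+γ₀C_t)`, `R̃_r⁺ = (1/2)log₂(1+γ₀C_r)`. -/
theorem noma_vs_oma_sum_rate (α β qt qr εt εr ηt ηr : ℝ) (N : ℕ)
    (hα : 0 < α) (hβ : 0 < β) (hαβ : α ^ 2 + β ^ 2 = 1)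
    (hqt : 0 < qt) (hqr : 0 < qr) (hq : qt ^ 2 + qr ^ 2 = 1)
    (hεt : 0 < εt) (hεr : 0 < εr) (hηt : 0 < ηt) (hηr : 0 < ηr) (hN : 1 ≤ N) :
    (α ^ 4 * εt ^ 2 * ηt > εr ^ 2 * ηr →
      ∀ᶠ γ₀ in atTop,
        Real.logb 2 (1 + γ₀ * (π ^ 2 * N ^ 2 * εt ^ 2 * ηt / 16) * qt ^ 2 * α ^ 2)
          + Real.logb 2 (1 + qr ^ 2 /
              (qt ^ 2 + (γ₀ * (π ^ 2 * N ^ 2 * εr ^ 2 * ηr / 16) * β ^ 2)⁻¹)) >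
        1 / 2 * Real.logb 2 (1 + γ₀ * (π ^ 2 * N ^ 2 * εt ^ 2 * ηt / 16))
          + 1 / 2 * Real.logb 2 (1 + γ₀ * (π ^ 2 * N ^ 2 * εr ^ 2 * ηr / 16))) ∧
    (α ^ 4 * εt ^ 2 * ηt < εr ^ 2 * ηr →
      ∀ᶠ γ₀ in atTop,
        Real.logb 2 (1 + γ₀ * (π ^ 2 * N ^ 2 * εt ^ 2 * ηt / 16) * qt ^ 2 * α ^ 2)
          + Real.logb 2 (1 + qr ^ 2 /
              (qt ^ 2 + (γ₀ * (π ^ 2 * N ^ 2 * εr ^ 2 * ηr / 16) * β ^ 2)⁻¹)) <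
        1 / 2 * Real.logb 2 (1 + γ₀ * (π ^ 2 * N ^ 2 * εt ^ 2 * ηt / 16))
          + 1 / 2 * Real.logb 2 (1 + γ₀ * (π ^ 2 * N ^ 2 * εr ^ 2 * ηr / 16))) := by
  have hπ : (0:ℝ) < π := Real.pi_pos
  have hN1 : (1:ℝ) ≤ (N:ℝ) := by exact_mod_cast hN
  have hN0 : (0:ℝ) < (N:ℝ) := lt_of_lt_of_le one_pos hN1
  set Ct : ℝ := π ^ 2 * (N:ℝ) ^ 2 * εt ^ 2 * ηt / 16 with hCtdef
  set Cr : ℝ := π ^ 2 * (N:ℝ) ^ 2 * εr ^ 2 * ηr / 16 with hCrdef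
  have hCt0 : 0 < Ct := by rw [hCtdef]; positivity
  have hCr0 : 0 < Cr := by rw [hCrdef]; positivity
  have hqt2 : (0:ℝ) < qt ^ 2 := by positivity
  set L0 : ℝ := Ct * α ^ 4 / Cr with hL0def
  have hL0pos : 0 < L0 := by rw [hL0def]; positivity
  -- limits of the building blocks
  have hA : Tendsto (fun γ : ℝ => (1 + γ * Ct * qt ^ 2 * α ^ 2) / γ) atTop
      (𝓝 (Ct * qt ^ 2 * α ^ 2)) := by
    have h1 : Tendsto (fun γ : ℝ => γ⁻¹ + Ct * qt ^ 2 * α ^ 2) atTop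
        (𝓝 (0 + Ct * qt ^ 2 * α ^ 2)) := tendsto_inv_atTop_zero.add tendsto_const_nhds
    rw [zero_add] at h1
    refine h1.congr' ?_
    filter_upwards [eventually_ne_atTop (0:ℝ)] with γ hγ
    field_simp
  have hC : Tendsto (fun γ : ℝ => (1 + γ * Ct) / γ) atTop (𝓝 Ct) := by
    have h1 : Tendsto (fun γ : ℝ => γ⁻¹ + Ct) atTop (𝓝 (0 + Ct)) :=
      tendsto_inv_atTop_zero.add tendsto_const_nhds
    rw [zero_add] at h1
    refine h1.congr' ?_
    filter_upwards [eventually_ne_atTop (0:ℝ)] with γ hγ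
    field_simp
  have hE : Tendsto (fun γ : ℝ => (1 + γ * Cr) / γ) atTop (𝓝 Cr) := by
    have h1 : Tendsto (fun γ : ℝ => γ⁻¹ + Cr) atTop (𝓝 (0 + Cr)) :=
      tendsto_inv_atTop_zero.add tendsto_const_nhds
    rw [zero_add] at h1
    refine h1.congr' ?_
    filter_upwards [eventually_ne_atTop (0:ℝ)] with γ hγ
    field_simp
  have hden : Tendsto (fun γ : ℝ => qt ^ 2 + (γ * Cr * β ^ 2)⁻¹) atTop (𝓝 (qt ^ 2)) := by
    have h2 : Tendsto (fun γ : ℝ => γ * (Cr * β ^ 2)) atTop atTop :=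
      Tendsto.atTop_mul_const (by positivity) tendsto_id
    have h3 := h2.inv_tendsto_atTop
    have h4 : Tendsto (fun γ : ℝ => qt ^ 2 + (γ * (Cr * β ^ 2))⁻¹) atTop (𝓝 (qt ^ 2 + 0)) :=
      tendsto_const_nhds.add h3
    simpa [mul_assoc] using h4
  have hB : Tendsto (fun γ : ℝ => 1 + qr ^ 2 / (qt ^ 2 + (γ * Cr * β ^ 2)⁻¹)) atTop
      (𝓝 (1 + qr ^ 2 / qt ^ 2)) :=
    tendsto_const_nhds.add (tendsto_const_nhds.div hden (ne_of_gt hqt2))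
  -- the combined rational expression
  have hF : Tendsto (fun γ : ℝ =>
      ((1 + γ * Ct * qt ^ 2 * α ^ 2) / γ) ^ 2
        * (1 + qr ^ 2 / (qt ^ 2 + (γ * Cr * β ^ 2)⁻¹)) ^ 2
        / (((1 + γ * Ct) / γ) * ((1 + γ * Cr) / γ))) atTop
      (𝓝 ((Ct * qt ^ 2 * α ^ 2) ^ 2 * (1 + qr ^ 2 / qt ^ 2) ^ 2 / (Ct * Cr))) :=
    ((hA.pow 2).mul (hB.pow 2)).div (hC.mul hE) (by positivity)
  have hval : (Ct * qt ^ 2 * α ^ 2) ^ 2 * (1 + qr ^ 2 / qt ^ 2) ^ 2 / (Ct * Cr) = L0 := by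
    have hq' : qr ^ 2 = 1 - qt ^ 2 := by linarith
    rw [hL0def, hq']
    field_simp
    ring
  rw [hval] at hF
  have hcont : ContinuousAt (Real.logb 2) L0 := Real.continuousAt_logb (ne_of_gt hL0pos)
  have hlog : Tendsto (fun γ : ℝ => 1 / 2 * Real.logb 2
      (((1 + γ * Ct * qt ^ 2 * α ^ 2) / γ) ^ 2
        * (1 + qr ^ 2 / (qt ^ 2 + (γ * Cr * β ^ 2)⁻¹)) ^ 2
        / (((1 + γ * Ct) / γ) * ((1 + γ * Cr) / γ)))) atTop
      (𝓝 (1 / 2 * Real.logb 2 L0)) :=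
    (tendsto_const_nhds.mul (hcont.tendsto.comp hF))
  -- identify with the difference of the sum rates, eventually
  have key : Tendsto (fun γ : ℝ =>
      (Real.logb 2 (1 + γ * Ct * qt ^ 2 * α ^ 2)
        + Real.logb 2 (1 + qr ^ 2 / (qt ^ 2 + (γ * Cr * β ^ 2)⁻¹)))
      - (1 / 2 * Real.logb 2 (1 + γ * Ct) + 1 / 2 * Real.logb 2 (1 + γ * Cr))) atTop
      (𝓝 (1 / 2 * Real.logb 2 L0)) := by
    refine hlog.congr' ?_
    filter_upwards [eventually_ge_atTop (1:ℝ)] with γ hγ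
    have hγ0 : 0 < γ := lt_of_lt_of_le one_pos hγ
    have hA0 : 0 < 1 + γ * Ct * qt ^ 2 * α ^ 2 := by positivity
    have hBden : 0 < qt ^ 2 + (γ * Cr * β ^ 2)⁻¹ := by positivity
    have hB0 : 0 < 1 + qr ^ 2 / (qt ^ 2 + (γ * Cr * β ^ 2)⁻¹) := by positivity
    have hC0 : 0 < 1 + γ * Ct := by positivity
    have hE0 : 0 < 1 + γ * Cr := by positivity
    have hrw : ((1 + γ * Ct * qt ^ 2 * α ^ 2) / γ) ^ 2
        * (1 + qr ^ 2 / (qt ^ 2 + (γ * Cr * β ^ 2)⁻¹)) ^ 2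
        / (((1 + γ * Ct) / γ) * ((1 + γ * Cr) / γ))
        = (1 + γ * Ct * qt ^ 2 * α ^ 2) ^ 2
          * (1 + qr ^ 2 / (qt ^ 2 + (γ * Cr * β ^ 2)⁻¹)) ^ 2
          / ((1 + γ * Ct) * (1 + γ * Cr)) := by
      rw [div_mul_div_comm, div_pow, div_mul_eq_mul_div, show γ * γ = γ ^ 2 by ring,
        div_div_div_eq, mul_comm (γ ^ 2) ((1 + γ * Ct) * (1 + γ * Cr)),
        mul_div_mul_right _ _ (by positivity : γ ^ 2 ≠ 0)]
    rw [hrw, Real.logb_div (by positivity) (by positivity),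
      Real.logb_mul (by positivity) (by positivity),
      Real.logb_mul (by positivity) (by positivity),
      Real.logb_pow, Real.logb_pow]
    push_cast
    ring
  constructor
  · intro h1
    have hCrCt : Cr < Ct * α ^ 4 := by
      rw [hCtdef, hCrdef]
      have hK : (0:ℝ) < π ^ 2 * (N:ℝ) ^ 2 / 16 := by positivity
      have h2 := (mul_lt_mul_iff_right₀ hK).mpr h1
      ring_nf at h2 ⊢
      linarith
    have hgt1 : 1 < L0 := by
      rw [hL0def, lt_div_iff₀ hCr0]; linarith
    have hLpos : 0 < 1 / 2 * Real.logb 2 L0 := by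
      have := Real.logb_pos one_lt_two hgt1; linarith
    filter_upwards [key.eventually (eventually_gt_nhds hLpos)] with γ hγ
    linarith
  · intro h1
    have hCrCt : Ct * α ^ 4 < Cr := by
      rw [hCtdef, hCrdef]
      have hK : (0:ℝ) < π ^ 2 * (N:ℝ) ^ 2 / 16 := by positivity
      have h2 := (mul_lt_mul_iff_right₀ hK).mpr h1
      ring_nf at h2 ⊢
      linarith
    have hlt1 : L0 < 1 := by
      rw [hL0def, div_lt_one hCr0]; linarith
    have hLneg : 1 / 2 * Real.logb 2 L0 < 0 := by
      have := Real.logb_neg one_lt_two hL0pos hlt1; linarith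
    filter_upwards [key.eventually (eventually_lt_nhds hLneg)] with γ hγ
    linarith
end
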